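/- arXiv:1406.5017 — 3 statements merged into one kernel-verified Lean document; each statement's English description precedes it below -/
import Mathlib

section
/- Let σ be an antisymmetric invertible 2n×2n complex matrix, α, β, α', β' ∈ ℂ^{2n} with βᵀσα = β'ᵀσα = 0 and αᵀσα = 0 (automatic). Set L₋₁ = (αβᵀ + βαᵀ)σ and L'₋₁ = (αβ'ᵀ + β'αᵀ)σ. Then [L₋₁, L'₋₁] = ν·ααᵀσ·c for some scalar, i.e., the commutator of two such rank-≤2 symplectic matrices lies in the one-dimensional space ℂ·ααᵀσ. Precisely, [L₋₁, L'₋₁] = (βᵀσβ' − β'ᵀσβ)·ααᵀσ = 2(βᵀσβ')·ααᵀσ. -/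
/-!
Each `L₋₁` is of the form `(uvᵀ + vuᵀ)σ`, and rank-one terms multiply by
`(u vᵀσ)(w zᵀσ) = (vᵀσw) · u zᵀσ`. Antisymmetry of `σ` makes `αᵀσα` vanish and turns the
hypotheses into `αᵀσβ = αᵀσβ' = 0`, so of the four terms of `L₋₁ L'₋₁` only
`(βᵀσβ') · ααᵀσ` survives; symmetrically `L'₋₁ L₋₁ = (β'ᵀσβ) · ααᵀσ = -(βᵀσβ') · ααᵀσ`.
-/

open Matrix

variable {R m : Type*} [CommRing R] [Fintype m]

theorem vecMulVec_mul_mul_vecMulVec_mul (σ : Matrix m m R) (u v w z : m → R) :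
    vecMulVec u v * σ * (vecMulVec w z * σ) = (v ⬝ᵥ σ *ᵥ w) • (vecMulVec u z * σ) := by
  rw [mul_assoc, ← mul_assoc σ, mul_vecMulVec, ← mul_assoc, vecMulVec_mul_vecMulVec,
    vecMulVec_smul, smul_mul_assoc]

theorem dotProduct_mulVec_of_transpose_eq_neg {σ : Matrix m m R} (hσ : σᵀ = -σ) (x y : m → R) :
    x ⬝ᵥ σ *ᵥ y = -(y ⬝ᵥ σ *ᵥ x) := by
  rw [dotProduct_mulVec, ← vecMul_transpose, hσ, vecMul_neg, dotProduct_neg, dotProduct_comm, neg_neg]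

theorem dotProduct_mulVec_self_of_transpose_eq_neg [IsAddTorsionFree R] {σ : Matrix m m R}
    (hσ : σᵀ = -σ) (x : m → R) : x ⬝ᵥ σ *ᵥ x = 0 :=
  self_eq_neg.mp (dotProduct_mulVec_of_transpose_eq_neg hσ x x)

theorem vecMulVec_add_swap_mul_mul_of_orthogonal (σ : Matrix m m R) {α β β' : m → R}
    (hαα : α ⬝ᵥ σ *ᵥ α = 0) (hβα : β ⬝ᵥ σ *ᵥ α = 0) (hαβ' : α ⬝ᵥ σ *ᵥ β' = 0) :
    (vecMulVec α β + vecMulVec β α) * σ * ((vecMulVec α β' + vecMulVec β' α) * σ) =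
      (β ⬝ᵥ σ *ᵥ β') • (vecMulVec α α * σ) := by
  simp only [add_mul, mul_add, vecMulVec_mul_mul_vecMulVec_mul, hαα, hβα, hαβ', zero_smul,
    zero_add, add_zero]

theorem sp_simple_pole_bracket_general
    (n : ℕ) (σ : Matrix (Fin (2 * n)) (Fin (2 * n)) ℂ)
    (hσ : σ.transpose = -σ)
    (α β β' : Fin (2 * n) → ℂ)
    (hβ : dotProduct β (σ.mulVec α) = 0)
    (hβ' : dotProduct β' (σ.mulVec α) = 0) :
    ⁅(Matrix.vecMulVec α β + Matrix.vecMulVec β α) * σ,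
      (Matrix.vecMulVec α β' + Matrix.vecMulVec β' α) * σ⁆ =
    (2 * dotProduct β (σ.mulVec β')) • (Matrix.vecMulVec α α * σ) := by
  have hαα := dotProduct_mulVec_self_of_transpose_eq_neg hσ α
  have hαβ : α ⬝ᵥ σ *ᵥ β = 0 := by
    rw [dotProduct_mulVec_of_transpose_eq_neg hσ, hβ, neg_zero]
  have hαβ' : α ⬝ᵥ σ *ᵥ β' = 0 := by
    rw [dotProduct_mulVec_of_transpose_eq_neg hσ, hβ', neg_zero]
  rw [Ring.lie_def, vecMulVec_add_swap_mul_mul_of_orthogonal σ hαα hβ hαβ',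
    vecMulVec_add_swap_mul_mul_of_orthogonal σ hαα hβ' hαβ,
    dotProduct_mulVec_of_transpose_eq_neg hσ β', ← sub_smul, sub_neg_eq_add, ← two_mul]

/-- Let `σ` be antisymmetric invertible, `α, β, β' ∈ ℂ^{2n}` with
`βᵀσα = 0` and `β'ᵀσα = 0` (and `αᵀσα = 0` automatically).  For
`L₋₁ = (αβᵀ + βαᵀ)σ` and `L'₋₁ = (αβ'ᵀ + β'αᵀ)σ` one has
`[L₋₁, L'₋₁] = 2(βᵀσβ') · ααᵀσ`, so the commutator lies in `ℂ · ααᵀσ`. -/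
theorem sp_simple_pole_bracket
    (n : ℕ) (σ : Matrix (Fin (2 * n)) (Fin (2 * n)) ℂ)
    (hσ : σ.transpose = -σ) (hinv : IsUnit σ)
    (α β β' : Fin (2 * n) → ℂ)
    (hβ : dotProduct β (σ.mulVec α) = 0)
    (hβ' : dotProduct β' (σ.mulVec α) = 0) :
    ⁅(Matrix.vecMulVec α β + Matrix.vecMulVec β α) * σ,
      (Matrix.vecMulVec α β' + Matrix.vecMulVec β' α) * σ⁆ =
    (2 * dotProduct β (σ.mulVec β')) • (Matrix.vecMulVec α α * σ) :=
  sp_simple_pole_bracket_general n σ hσ α β β' hβ hβ'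
end

section
/- Let σ be a symmetric invertible 2n×2n complex matrix and α, β, β' ∈ ℂ^{2n} with αᵀσα = 0, βᵀσα = 0, β'ᵀσα = 0. Set L₋₁ = (αβᵀ − βαᵀ)σ and L'₋₁ = (αβ'ᵀ − β'αᵀ)σ. Then the commutator [L₋₁, L'₋₁] again has the form (αγᵀ − γαᵀ)σ for some γ ∈ ℂ^{2n} with γᵀσα = 0. -/
open Matrix

lemma vecMulVec_mul_vecMulVec {m : Type*} [Fintype m] (a b c d : m → ℂ) :
    vecMulVec a b * vecMulVec c d = (b ⬝ᵥ c) • vecMulVec a d := by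
  ext i j
  simp only [mul_apply, vecMulVec_apply, Matrix.smul_apply, dotProduct, Finset.sum_mul,
    smul_eq_mul]
  exact Finset.sum_congr rfl fun k _ => by ring

lemma vecMulVec_mul_mat {m : Type*} [Fintype m] (a b : m → ℂ)
    (M : Matrix m m ℂ) : vecMulVec a b * M = vecMulVec a (M.vecMul b) := by
  ext i j
  simp only [mul_apply, vecMulVec_apply, vecMul, dotProduct, Finset.mul_sum]
  exact Finset.sum_congr rfl fun k _ => by ring

/-- Let `σ` be symmetric invertible, `α, β, β' ∈ ℂ^{2n}` with
`αᵀσα = 0`, `βᵀσα = 0`, `β'ᵀσα = 0`.  For `L₋₁ = (αβᵀ − βαᵀ)σ` and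
`L'₋₁ = (αβ'ᵀ − β'αᵀ)σ`, the commutator `[L₋₁, L'₋₁]` is again of the form
`(αγᵀ − γαᵀ)σ` for some `γ ∈ ℂ^{2n}` with `γᵀσα = 0`. -/
theorem so_simple_pole_bracket
    (n : ℕ) (σ : Matrix (Fin (2 * n)) (Fin (2 * n)) ℂ)
    (hσ : σ.IsSymm) (hinv : IsUnit σ)
    (α β β' : Fin (2 * n) → ℂ)
    (hα : dotProduct α (σ.mulVec α) = 0)
    (hβ : dotProduct β (σ.mulVec α) = 0)
    (hβ' : dotProduct β' (σ.mulVec α) = 0) :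
    ∃ γ : Fin (2 * n) → ℂ, dotProduct γ (σ.mulVec α) = 0 ∧
      ⁅(Matrix.vecMulVec α β - Matrix.vecMulVec β α) * σ,
        (Matrix.vecMulVec α β' - Matrix.vecMulVec β' α) * σ⁆ =
      (Matrix.vecMulVec α γ - Matrix.vecMulVec γ α) * σ := by
  refine ⟨0, by simp, ?_⟩
  have hvm : ∀ v : Fin (2 * n) → ℂ, σ.vecMul v = σ.mulVec v := by
    intro v
    conv_lhs => rw [← hσ.eq]
    rw [vecMul_transpose]
  have hsymm : ∀ u v : Fin (2 * n) → ℂ, u ⬝ᵥ σ.mulVec v = v ⬝ᵥ σ.mulVec u := by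
    intro u v
    rw [dotProduct_mulVec, hvm, dotProduct_comm]
  have key : ∀ a b c d : Fin (2 * n) → ℂ,
      (vecMulVec a b * σ) * (vecMulVec c d * σ)
        = (b ⬝ᵥ σ.mulVec c) • (vecMulVec a d * σ) := by
    intro a b c d
    rw [vecMulVec_mul_mat a b σ, hvm, ← mul_assoc, _root_.vecMulVec_mul_vecMulVec,
      Matrix.smul_mul, dotProduct_comm, hsymm]
  have h1 : α ⬝ᵥ σ.mulVec β = 0 := by rw [hsymm]; exact hβ
  have h1' : α ⬝ᵥ σ.mulVec β' = 0 := by rw [hsymm]; exact hβ'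
  have hββ' : β ⬝ᵥ σ.mulVec β' = β' ⬝ᵥ σ.mulVec β := hsymm β β'
  simp only [Ring.lie_def, sub_mul, mul_sub, key, hα, hβ, hβ', h1, h1', zero_smul]
  rw [hββ']
  ext i j
  simp [mul_apply, vecMulVec_apply]
end

section
/- Let L, L' ∈ g ⊗ ℂ((z)) be formal Laurent series L = Σ_{p ≥ -k} L_p z^p, L' = Σ_{q ≥ -k} L'_q z^q with L_p, L'_q in the filtration subspaces F_p, F_q of a ℤ-graded semisimple Lie algebra g with invariant form ⟨·,·⟩, and let ω = (H z^{-1} + Σ_{l≥0} ω_l z^l) dz with ω_l ∈ g_0 and H the grading element. Then the formal 1-form ⟨L, dL' − [ω, L']⟩ has no terms z^m dz with m < 0; i.e., it is a formal power series in z times dz (holomorphic at z = 0). -/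
/-!
Invariance of `B` gives `(a + b) B(X, Y) = 0` for `X ∈ g_a`, `Y ∈ g_b`, so the filtration pieces
`F p` and `F q` are `B`-orthogonal as soon as `p + q < 0`. In the coefficient of `z^m dz`, `m < 0`,
every term pairs `L_p ∈ F p` against an element of `F (m - p - l)` (brackets with `ω_l ∈ g_0`
preserve the filtration), hence vanishes for `l ≥ 0`. The residue term `l = -1` pairs `L_p` with
`[H, L'_q]`, `q = m + 1 - p`, and `[H, L'_q] ≡ q L'_q` modulo `F (q - 1) ⟂ F p`; so it cancels
exactly against the derivative term `q B(L_p, L'_q)`.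
-/

open Module.End

section AdFiltration

variable {K g : Type*} [Field K] [LieRing g] [LieAlgebra K g]

variable (K) in
def adFiltration (H : g) (p : ℤ) : Submodule K g :=
  ⨆ q ≤ p, eigenspace (LieAlgebra.ad K g H) (q : K)

variable {H : g}

lemma mem_eigenspace_ad_iff {a : K} {X : g} :
    X ∈ eigenspace (LieAlgebra.ad K g H) a ↔ ⁅H, X⁆ = a • X := by
  rw [mem_eigenspace_iff, LieAlgebra.ad_apply]

lemma eigenspace_ad_le_adFiltration {b p : ℤ} (hbp : b ≤ p) :
    eigenspace (LieAlgebra.ad K g H) (b : K) ≤ adFiltration K H p :=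
  le_iSup₂_of_le b hbp le_rfl

lemma lie_mem_eigenspace_ad_of_mem_eigenspace_zero {a : K} {w Y : g}
    (hw : w ∈ eigenspace (LieAlgebra.ad K g H) 0)
    (hY : Y ∈ eigenspace (LieAlgebra.ad K g H) a) :
    ⁅w, Y⁆ ∈ eigenspace (LieAlgebra.ad K g H) a := by
  rw [mem_eigenspace_ad_iff] at hw hY ⊢
  rw [leibniz_lie, hw, hY, zero_smul, zero_lie, zero_add, lie_smul]

lemma lie_mem_adFiltration_of_mem_eigenspace_zero {q : ℤ} {w Y : g}
    (hw : w ∈ eigenspace (LieAlgebra.ad K g H) 0) (hY : Y ∈ adFiltration K H q) :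
    ⁅w, Y⁆ ∈ adFiltration K H q := by
  suffices adFiltration K H q ≤ (adFiltration K H q).comap (LieAlgebra.ad K g w) from this hY
  refine iSup₂_le fun b hbq Z hZ => ?_
  exact eigenspace_ad_le_adFiltration hbq (lie_mem_eigenspace_ad_of_mem_eigenspace_zero hw hZ)

lemma lie_sub_smul_mem_adFiltration_pred {q : ℤ} {Y : g} (hY : Y ∈ adFiltration K H q) :
    ⁅H, Y⁆ - (q : K) • Y ∈ adFiltration K H (q - 1) := by
  suffices adFiltration K H q ≤
      (adFiltration K H (q - 1)).comap (LieAlgebra.ad K g H - (q : K) • 1) from this hY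
  refine iSup₂_le fun b hbq Z hZ => ?_
  have hHZ : ⁅H, Z⁆ - (q : K) • Z = ((b : K) - q) • Z := by
    rw [mem_eigenspace_ad_iff.mp hZ, sub_smul]
  simp only [Submodule.mem_comap, LinearMap.sub_apply, LinearMap.smul_apply, one_apply,
    LieAlgebra.ad_apply, hHZ]
  rcases hbq.lt_or_eq with hlt | rfl
  · exact Submodule.smul_mem _ _ (eigenspace_ad_le_adFiltration (by omega) hZ)
  · rw [sub_self, zero_smul]
    exact Submodule.zero_mem _

variable (B : LinearMap.BilinForm K g) (hBinv : ∀ X Y Z : g, B ⁅X, Y⁆ Z = B X ⁅Y, Z⁆)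
include hBinv

lemma bilinForm_eq_zero_of_mem_eigenspace_ad {a b : K} (hab : a + b ≠ 0) {X Y : g}
    (hX : X ∈ eigenspace (LieAlgebra.ad K g H) a)
    (hY : Y ∈ eigenspace (LieAlgebra.ad K g H) b) : B X Y = 0 := by
  have hinv := hBinv X H Y
  rw [← lie_skew, mem_eigenspace_ad_iff.mp hX, mem_eigenspace_ad_iff.mp hY] at hinv
  simp only [map_neg, map_smul, LinearMap.neg_apply, LinearMap.smul_apply, smul_eq_mul] at hinv
  have hsum : (a + b) * B X Y = 0 := by linear_combination -hinv
  exact (mul_eq_zero.mp hsum).resolve_left hab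

variable [CharZero K]

lemma adFiltration_le_orthogonal {p q : ℤ} (hpq : p + q < 0) :
    adFiltration K H q ≤ B.orthogonal (adFiltration K H p) := by
  refine iSup₂_le fun b hbq Y hY X hX => ?_
  suffices adFiltration K H p ≤ LinearMap.ker (B.flip Y) from this hX
  refine iSup₂_le fun a hap Z hZ => ?_
  refine bilinForm_eq_zero_of_mem_eigenspace_ad B hBinv ?_ hZ hY
  exact_mod_cast (by omega : a + b ≠ 0)

lemma bilinForm_eq_zero_of_mem_adFiltration {p q : ℤ} (hpq : p + q < 0) {X Y : g}
    (hX : X ∈ adFiltration K H p) (hY : Y ∈ adFiltration K H q) : B X Y = 0 :=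
  adFiltration_le_orthogonal B hBinv hpq hY X hX

lemma bilinForm_lie_eq_mul_of_mem_adFiltration {p q : ℤ} (hpq : p + q ≤ 0) {X Y : g}
    (hX : X ∈ adFiltration K H p) (hY : Y ∈ adFiltration K H q) :
    B X ⁅H, Y⁆ = (q : K) * B X Y := by
  have hlow := bilinForm_eq_zero_of_mem_adFiltration B hBinv (by omega) hX
    (lie_sub_smul_mem_adFiltration_pred hY)
  rwa [map_sub, map_smul, smul_eq_mul, sub_eq_zero] at hlow

end AdFiltration

theorem one_form_holomorphic_at_gamma_general
    {g : Type*} [LieRing g] [LieAlgebra ℂ g]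
    (H : g) (k : ℕ)
    (B : LinearMap.BilinForm ℂ g)
    (hBinv : ∀ X Y Z : g, B ⁅X, Y⁆ Z = B X ⁅Y, Z⁆)
    (F : ℤ → Submodule ℂ g)
    (hF : ∀ p, F p = ⨆ q ≤ p, Module.End.eigenspace (LieAlgebra.ad ℂ g H) (q : ℂ))
    (L L' : ℤ → g) (hL : ∀ p, L p ∈ F p) (hL' : ∀ q, L' q ∈ F q)
    (ω : ℤ → g)
    (hωres : ω (-1) = H)
    (hω0 : ∀ l : ℤ, 0 ≤ l → ω l ∈ Module.End.eigenspace (LieAlgebra.ad ℂ g H) (0 : ℂ)) :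
    ∀ m : ℤ, m < 0 →
      (∑ p ∈ Finset.Icc (-(k : ℤ)) (m + 1 + k),
        (((m + 1 - p : ℤ) : ℂ) * B (L p) (L' (m + 1 - p)) -
          ∑ l ∈ Finset.Icc (-1 : ℤ) (m - p + k), B (L p) ⁅ω l, L' (m - p - l)⁆)) = 0 := by
  obtain rfl : F = adFiltration ℂ H := funext hF
  intro m hm
  refine Finset.sum_eq_zero fun p hp => ?_
  have hpk : p ≤ m + 1 + k := (Finset.mem_Icc.mp hp).2
  have hregular : ∀ l ∈ Finset.Icc (-1 : ℤ) (m - p + k), l ≠ -1 →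
      B (L p) ⁅ω l, L' (m - p - l)⁆ = 0 := by
    intro l hl hl1
    have hl0 : 0 ≤ l := by have := (Finset.mem_Icc.mp hl).1; omega
    exact bilinForm_eq_zero_of_mem_adFiltration B hBinv (by omega) (hL p)
      (lie_mem_adFiltration_of_mem_eigenspace_zero (hω0 l hl0) (hL' _))
  have hres : B (L p) ⁅ω (-1), L' (m - p - -1)⁆ =
      ((m + 1 - p : ℤ) : ℂ) * B (L p) (L' (m + 1 - p)) := by
    rw [hωres, show m - p - -1 = m + 1 - p by ring]
    exact bilinForm_lie_eq_mul_of_mem_adFiltration B hBinv (by omega) (hL p) (hL' _)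
  rw [Finset.sum_eq_single_of_mem (-1) (Finset.mem_Icc.mpr ⟨le_rfl, by omega⟩) hregular, hres,
    sub_self]

/-- Theorem 3.1, 1°, local form: Let `g` be a finite-dimensional semisimple
complex Lie algebra graded by the eigenspaces `g_p` of `ad H` (depth `k`), with filtration
`F p = ⨁_{q ≤ p} g_q` and invariant symmetric bilinear form `B`.  Let
`L = Σ_{p} L_p z^p`, `L' = Σ_{q} L'_q z^q` be formal Laurent series with `L_p ∈ F_p`,
`L'_q ∈ F_q`, and let `ω = (H z^{-1} + Σ_{l ≥ 0} ω_l z^l) dz` with `ω_l ∈ g_0`.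
Then the formal 1-form `⟨L, dL' − [ω, L']⟩` has no terms `z^m dz` with `m < 0`, i.e. its
coefficient at `z^m dz`, namely
`Σ_p ((m+1−p)·B(L_p, L'_{m+1−p}) − Σ_l B(L_p, [ω_l, L'_{m−p−l}]))`, vanishes for `m < 0`. -/
theorem one_form_holomorphic_at_gamma
    {g : Type*} [LieRing g] [LieAlgebra ℂ g] [FiniteDimensional ℂ g]
    [LieAlgebra.IsSemisimple ℂ g]
    (H : g) (k : ℕ)
    (hdepth : ∀ r : ℤ, (k : ℤ) < |r| →
      Module.End.eigenspace (LieAlgebra.ad ℂ g H) (r : ℂ) = ⊥)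
    (B : LinearMap.BilinForm ℂ g)
    (hBsymm : ∀ X Y : g, B X Y = B Y X)
    (hBinv : ∀ X Y Z : g, B ⁅X, Y⁆ Z = B X ⁅Y, Z⁆)
    (F : ℤ → Submodule ℂ g)
    (hF : ∀ p, F p = ⨆ q ≤ p, Module.End.eigenspace (LieAlgebra.ad ℂ g H) (q : ℂ))
    (L L' : ℤ → g) (hL : ∀ p, L p ∈ F p) (hL' : ∀ q, L' q ∈ F q)
    (ω : ℤ → g)
    (hωres : ω (-1) = H)
    (hω0 : ∀ l : ℤ, 0 ≤ l → ω l ∈ Module.End.eigenspace (LieAlgebra.ad ℂ g H) (0 : ℂ))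
    (hωneg : ∀ l : ℤ, l < -1 → ω l = 0) :
    ∀ m : ℤ, m < 0 →
      (∑ p ∈ Finset.Icc (-(k : ℤ)) (m + 1 + k),
        (((m + 1 - p : ℤ) : ℂ) * B (L p) (L' (m + 1 - p)) -
          ∑ l ∈ Finset.Icc (-1 : ℤ) (m - p + k), B (L p) ⁅ω l, L' (m - p - l)⁆)) = 0 :=
  one_form_holomorphic_at_gamma_general H k B hBinv F hF L L' hL hL' ω hωres hω0
end
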